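/- Let n ≥ 1 be an integer and σ a real with 0 < 2σ < n, and let c > 0, C₀ > 0. Then there exists a constant C > 0 such that for every t > 0 and every nonnegative f ∈ L²(ℝⁿ), ‖ φ_σ(·,t) · (G(·, ct) ∗ (φ_σ(·,t) f)) ‖_{L²(ℝⁿ)} ≤ C·‖f‖_{L²(ℝⁿ)}; consequently any integral operator T_t with measurable kernel satisfying 0 ≤ K(t,x,y) ≤ C₀·φ_σ(x,t)·φ_σ(y,t)·G(x−y, ct) is bounded on L²(ℝⁿ) with operator norm bounded uniformly in t. -/

import Mathlib

/-!
Both `φ_σ(·,t)` and `G(·,ct)` are invariant under the parabolic dilation `x ↦ √t x` (the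
heat kernel up to its Jacobian), so `sup_z ∫ G(z - w, ct) φ_σ(w,t)² dw` does not depend on `t`.
At `t = 1` it is at most `1 + ‖G(·,c)‖_∞ ∫_{|w| ≤ 1} |w|^{-2σ} dw`, which is finite because
`2σ < n`. Given this bound `A`, the Schur test (Cauchy–Schwarz against the measure `G(x - y) dy`,
then Tonelli and the symmetry of `G`) bounds the operator with kernel `φ(x) G(x - y) φ(y)` on `L²`
by `A`; a kernel dominated by `C₀` times that one is handled through `‖∫ K f‖ ≤ ∫ |K| |f|`.
-/

open Real MeasureTheory

/-- The Gauss–Weierstrass heat kernel on `ℝⁿ`. -/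
noncomputable def heatKernel (n : ℕ) (x : EuclideanSpace ℝ (Fin n)) (t : ℝ) : ℝ :=
  (4 * Real.pi * t) ^ (-(n : ℝ) / 2) * Real.exp (-‖x‖ ^ 2 / (4 * t))

/-- The weight `φ_σ(x,t) = (√t/|x|)^σ` for `|x| ≤ √t`, and `1` for `|x| ≥ √t`. -/
noncomputable def phiWeight (n : ℕ) (σ : ℝ) (x : EuclideanSpace ℝ (Fin n)) (t : ℝ) : ℝ :=
  if ‖x‖ ≤ Real.sqrt t then (Real.sqrt t / ‖x‖) ^ σ else 1

open Metric Set
open scoped ENNReal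

section Schur

variable {α : Type*} [MeasurableSpace α] {μ : Measure α}

theorem lintegral_mul_sq_le {f g : α → ℝ≥0∞} (hf : AEMeasurable f μ) (hg : AEMeasurable g μ) :
    (∫⁻ a, f a * g a ∂μ) ^ 2 ≤ (∫⁻ a, f a ^ 2 ∂μ) * ∫⁻ a, g a ^ 2 ∂μ := by
  have h := ENNReal.lintegral_mul_le_Lp_mul_Lq μ Real.HolderConjugate.two_two hf hg
  simp only [Pi.mul_apply, ENNReal.rpow_two] at h
  calc (∫⁻ a, f a * g a ∂μ) ^ 2
      ≤ ((∫⁻ a, f a ^ 2 ∂μ) ^ (1 / 2 : ℝ) * (∫⁻ a, g a ^ 2 ∂μ) ^ (1 / 2 : ℝ)) ^ 2 := by gcongr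
    _ = (∫⁻ a, f a ^ 2 ∂μ) * ∫⁻ a, g a ^ 2 ∂μ := by
      simp only [mul_pow, ← ENNReal.rpow_natCast, ← ENNReal.rpow_mul]
      norm_num

theorem lintegral_weighted_mul_sq_le {w f g : α → ℝ≥0∞} (hw : AEMeasurable w μ)
    (hf : AEMeasurable f μ) (hg : AEMeasurable g μ) :
    (∫⁻ a, w a * (f a * g a) ∂μ) ^ 2 ≤ (∫⁻ a, w a * f a ^ 2 ∂μ) * ∫⁻ a, w a * g a ^ 2 ∂μ := by
  have hac : μ.withDensity w ≪ μ := withDensity_absolutelyContinuous μ w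
  have h := lintegral_mul_sq_le (hf.mono_ac hac) (hg.mono_ac hac)
  have hν : ∀ h : α → ℝ≥0∞, AEMeasurable h μ →
      ∫⁻ a, h a ∂μ.withDensity w = ∫⁻ a, w a * h a ∂μ :=
    fun h hh => lintegral_withDensity_eq_lintegral_mul₀ hw hh
  rwa [hν (fun a => f a * g a) (hf.mul hg), hν (fun a => f a ^ 2) (hf.pow_const 2),
    hν (fun a => g a ^ 2) (hg.pow_const 2)] at h

variable [SFinite μ] {k : α → α → ℝ≥0∞} {Φ F : α → ℝ≥0∞} {A : ℝ≥0∞}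

theorem lintegral_sq_mul_lintegral_le_of_schur (hk : Measurable (Function.uncurry k))
    (hΦ : Measurable Φ) (hF : Measurable F) (h₁ : ∀ x, ∫⁻ y, k x y * Φ y ^ 2 ∂μ ≤ A)
    (h₂ : ∀ y, ∫⁻ x, k x y * Φ x ^ 2 ∂μ ≤ A) :
    ∫⁻ x, (Φ x * ∫⁻ y, k x y * (Φ y * F y) ∂μ) ^ 2 ∂μ ≤ A ^ 2 * ∫⁻ x, F x ^ 2 ∂μ := by
  have hkF : ∀ x, Measurable fun y => k x y * F y ^ 2 := fun x =>
    hk.of_uncurry_left.mul (hF.pow_const 2)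
  have hkΦ : ∀ y, Measurable fun x => k x y * Φ x ^ 2 := fun y =>
    hk.of_uncurry_right.mul (hΦ.pow_const 2)
  have hprod : Measurable fun p : α × α => Φ p.1 ^ 2 * (k p.1 p.2 * F p.2 ^ 2) :=
    ((hΦ.comp measurable_fst).pow_const 2).mul (hk.mul ((hF.comp measurable_snd).pow_const 2))
  have hinner : ∀ x, (∫⁻ y, k x y * (Φ y * F y) ∂μ) ^ 2 ≤ A * ∫⁻ y, k x y * F y ^ 2 ∂μ :=
    fun x => (lintegral_weighted_mul_sq_le hk.of_uncurry_left.aemeasurable hΦ.aemeasurable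
      hF.aemeasurable).trans (by gcongr; exact h₁ x)
  calc ∫⁻ x, (Φ x * ∫⁻ y, k x y * (Φ y * F y) ∂μ) ^ 2 ∂μ
      ≤ ∫⁻ x, A * ∫⁻ y, Φ x ^ 2 * (k x y * F y ^ 2) ∂μ ∂μ := by
        refine lintegral_mono fun x => ?_
        rw [mul_pow, lintegral_const_mul _ (hkF x), mul_left_comm]
        gcongr
        exact hinner x
    _ = A * ∫⁻ y, F y ^ 2 * ∫⁻ x, k x y * Φ x ^ 2 ∂μ ∂μ := by
        rw [lintegral_const_mul _ hprod.lintegral_prod_right', lintegral_lintegral_swap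
          (f := fun x y => Φ x ^ 2 * (k x y * F y ^ 2)) hprod.aemeasurable]
        congr 1
        refine lintegral_congr fun y => ?_
        rw [← lintegral_const_mul _ (hkΦ y)]
        congr 1 with x
        ring
    _ ≤ A * ∫⁻ y, F y ^ 2 * A ∂μ := by gcongr with y; exact h₂ y
    _ = A ^ 2 * ∫⁻ x, F x ^ 2 ∂μ := by rw [lintegral_mul_const _ (hF.pow_const 2)]; ring

omit [SFinite μ] in
theorem eLpNorm_two_le_of_lintegral_sq_le {g f : α → ℝ≥0∞}
    (h : ∫⁻ x, g x ^ 2 ∂μ ≤ A ^ 2 * ∫⁻ x, f x ^ 2 ∂μ) : eLpNorm g 2 μ ≤ A * eLpNorm f 2 μ := by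
  have hsq : ∀ h : α → ℝ≥0∞, eLpNorm h 2 μ ^ 2 = ∫⁻ x, h x ^ 2 ∂μ := fun h => by
    simpa using eLpNorm_nnreal_pow_eq_lintegral (μ := μ) (f := h) (p := 2) two_ne_zero
  rwa [← ENNReal.pow_le_pow_left_iff two_ne_zero, mul_pow, hsq, hsq]

theorem eLpNorm_mul_lintegral_le_of_schur (hk : Measurable (Function.uncurry k))
    (hΦ : Measurable Φ) (hF : AEMeasurable F μ) (h₁ : ∀ x, ∫⁻ y, k x y * Φ y ^ 2 ∂μ ≤ A)
    (h₂ : ∀ y, ∫⁻ x, k x y * Φ x ^ 2 ∂μ ≤ A) :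
    eLpNorm (fun x => Φ x * ∫⁻ y, k x y * (Φ y * F y) ∂μ) 2 μ ≤ A * eLpNorm F 2 μ := by
  have hF_mk : (fun x => Φ x * ∫⁻ y, k x y * (Φ y * F y) ∂μ)
      = fun x => Φ x * ∫⁻ y, k x y * (Φ y * hF.mk F y) ∂μ := by
    funext x
    congr 1
    refine lintegral_congr_ae ?_
    filter_upwards [hF.ae_eq_mk] with y hy
    rw [hy]
  rw [hF_mk, eLpNorm_congr_ae hF.ae_eq_mk]
  exact eLpNorm_two_le_of_lintegral_sq_le
    (lintegral_sq_mul_lintegral_le_of_schur hk hΦ hF.measurable_mk h₁ h₂)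

end Schur

theorem setLIntegral_closedBall_norm_rpow_neg_lt_top {E : Type*} [NormedAddCommGroup E]
    [NormedSpace ℝ E] [FiniteDimensional ℝ E] [MeasurableSpace E] [BorelSpace E]
    (μ : Measure E) [μ.IsAddHaarMeasure] {α : ℝ} (hd : 1 ≤ Module.finrank ℝ E)
    (hα : α < Module.finrank ℝ E) (r : ℝ) :
    ∫⁻ x in closedBall 0 r, ENNReal.ofReal (‖x‖ ^ (-α)) ∂μ < ∞ := by
  have hloc : LocallyIntegrable (fun x : E => ‖x‖ ^ (-α)) μ :=
    locallyIntegrable_of_norm_le_rpow hd hα (C := 1)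
      (ae_of_all _ fun x => by
        rw [one_mul, Real.norm_of_nonneg (Real.rpow_nonneg (norm_nonneg x) _)])
      (measurable_norm.pow_const _).aestronglyMeasurable
  have hfin := (hloc.integrableOn_isCompact (isCompact_closedBall 0 r)).hasFiniteIntegral
  refine (lintegral_congr fun x => ?_).trans_lt hfin
  exact (Real.enorm_of_nonneg (Real.rpow_nonneg (norm_nonneg x) _)).symm

theorem lintegral_comp_smul {E : Type*} [NormedAddCommGroup E] [NormedSpace ℝ E]
    [FiniteDimensional ℝ E] [MeasurableSpace E] [BorelSpace E] (μ : Measure E)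
    [μ.IsAddHaarMeasure] (f : E → ℝ≥0∞) {R : ℝ} (hR : R ≠ 0) :
    ∫⁻ x, f (R • x) ∂μ = ENNReal.ofReal |(R ^ Module.finrank ℝ E)⁻¹| * ∫⁻ x, f x ∂μ := by
  calc ∫⁻ x, f (R • x) ∂μ = ∫⁻ x, f x ∂Measure.map (R • ·) μ :=
        (lintegral_map_equiv f (MeasurableEquiv.smul₀ R hR)).symm
    _ = _ := by rw [Measure.map_addHaar_smul μ hR, lintegral_smul_measure, smul_eq_mul]

variable {n : ℕ}

local notation "ℝⁿ" => EuclideanSpace ℝ (Fin n)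

theorem heatKernel_nonneg {t : ℝ} (ht : 0 < t) (x : ℝⁿ) : 0 ≤ heatKernel n x t := by
  unfold heatKernel
  positivity

theorem heatKernel_le {t : ℝ} (ht : 0 < t) (x : ℝⁿ) :
    heatKernel n x t ≤ (4 * π * t) ^ (-(n : ℝ) / 2) := by
  unfold heatKernel
  refine mul_le_of_le_one_right (by positivity) (Real.exp_le_one_iff.2 ?_)
  exact div_nonpos_of_nonpos_of_nonneg (neg_nonpos.2 (by positivity)) (by positivity)

theorem measurable_heatKernel (t : ℝ) : Measurable fun x : ℝⁿ => heatKernel n x t := by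
  unfold heatKernel
  fun_prop

theorem heatKernel_sub_comm (x y : ℝⁿ) (t : ℝ) :
    heatKernel n (x - y) t = heatKernel n (y - x) t := by
  rw [heatKernel, heatKernel, norm_sub_rev]

theorem heatKernel_smul {r s : ℝ} (hr : 0 < r) (hs : 0 < s) (v : ℝⁿ) :
    heatKernel n (r • v) (s * r ^ 2) = (r ^ n)⁻¹ * heatKernel n v s := by
  have hpow : (4 * π * (s * r ^ 2)) ^ (-(n : ℝ) / 2)
      = (r ^ n)⁻¹ * (4 * π * s) ^ (-(n : ℝ) / 2) := by
    rw [show 4 * π * (s * r ^ 2) = r ^ 2 * (4 * π * s) by ring,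
      Real.mul_rpow (by positivity) (by positivity), ← Real.rpow_natCast r 2,
      ← Real.rpow_mul hr.le, ← Real.rpow_natCast r n, ← Real.rpow_neg hr.le]
    congr 2
    push_cast
    ring
  have hexp : -‖r • v‖ ^ 2 / (4 * (s * r ^ 2)) = -‖v‖ ^ 2 / (4 * s) := by
    rw [norm_smul, Real.norm_of_nonneg hr.le]
    field_simp
  rw [heatKernel, heatKernel, hpow, hexp, mul_assoc]

theorem lintegral_heatKernel {t : ℝ} (ht : 0 < t) :
    ∫⁻ x : ℝⁿ, ENNReal.ofReal (heatKernel n x t) = 1 := by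
  have hb : 0 < 1 / (4 * t) := by positivity
  have hG : ∀ x : ℝⁿ, heatKernel n x t
      = (4 * π * t) ^ (-(n : ℝ) / 2) * Real.exp (-(1 / (4 * t)) * ‖x‖ ^ 2) := fun x => by
    rw [heatKernel]
    ring_nf
  have hgauss : ∫ x : ℝⁿ, Real.exp (-(1 / (4 * t)) * ‖x‖ ^ 2)
      = (4 * π * t) ^ ((n : ℝ) / 2) := by
    rw [GaussianFourier.integral_rexp_neg_mul_sq_norm hb, finrank_euclideanSpace_fin]
    congr 1
    field_simp
  have hint : Integrable fun x : ℝⁿ => Real.exp (-(1 / (4 * t)) * ‖x‖ ^ 2) :=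
    Integrable.of_integral_ne_zero (by rw [hgauss]; positivity)
  simp only [hG]
  rw [← ofReal_integral_eq_lintegral_ofReal (hint.const_mul _)
    (ae_of_all _ fun x => by positivity), integral_const_mul, hgauss,
    ← Real.rpow_add (by positivity), neg_div, neg_add_cancel,
    Real.rpow_zero, ENNReal.ofReal_one]

theorem phiWeight_nonneg (σ : ℝ) (x : ℝⁿ) (t : ℝ) : 0 ≤ phiWeight n σ x t := by
  unfold phiWeight
  split_ifs <;> positivity

theorem measurable_phiWeight (σ t : ℝ) : Measurable fun x : ℝⁿ => phiWeight n σ x t :=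
  Measurable.ite (measurableSet_le measurable_norm measurable_const)
    ((measurable_const.div measurable_norm).pow_const σ) measurable_const

theorem phiWeight_sqrt_smul {t : ℝ} (ht : 0 < t) (σ : ℝ) (u : ℝⁿ) :
    phiWeight n σ (√t • u) t = phiWeight n σ u 1 := by
  have hst : 0 < √t := Real.sqrt_pos.2 ht
  simp only [phiWeight, norm_smul, Real.norm_of_nonneg hst.le, Real.sqrt_one,
    mul_le_iff_le_one_right hst, div_mul_cancel_left₀ hst.ne', one_div]

theorem ofReal_phiWeight_one_sq_le (σ : ℝ) (u : ℝⁿ) :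
    ENNReal.ofReal (phiWeight n σ u 1) ^ 2
      ≤ 1 + (closedBall 0 1).indicator (fun u => ENNReal.ofReal (‖u‖ ^ (-(2 * σ)))) u := by
  by_cases hu : ‖u‖ ≤ 1
  · rw [indicator_of_mem (mem_closedBall_zero_iff.2 hu)]
    refine le_add_left (le_of_eq ?_)
    rw [phiWeight, Real.sqrt_one, if_pos hu, ← ENNReal.ofReal_pow (by positivity), one_div,
      Real.inv_rpow (norm_nonneg _), ← Real.rpow_neg (norm_nonneg _), ← Real.rpow_two,
      ← Real.rpow_mul (norm_nonneg _)]
    ring_nf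
  · rw [phiWeight, Real.sqrt_one, if_neg hu]
    simp

section UniformBound

variable {σ c : ℝ}

theorem lintegral_heatKernel_mul_phiWeight_one_sq_le (hc : 0 < c) (z : ℝⁿ) :
    ∫⁻ u, ENNReal.ofReal (heatKernel n (z - u) c) * ENNReal.ofReal (phiWeight n σ u 1) ^ 2
      ≤ 1 + ENNReal.ofReal ((4 * π * c) ^ (-(n : ℝ) / 2))
        * ∫⁻ u : ℝⁿ in closedBall 0 1, ENNReal.ofReal (‖u‖ ^ (-(2 * σ))) := by
  set S := (closedBall (0 : ℝⁿ) 1).indicator fun u => ENNReal.ofReal (‖u‖ ^ (-(2 * σ)))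
  have hS : Measurable S :=
    (measurable_norm.pow_const _).ennreal_ofReal.indicator measurableSet_closedBall
  have hG : Measurable fun u : ℝⁿ => ENNReal.ofReal (heatKernel n (z - u) c) :=
    ((measurable_heatKernel c).comp (measurable_const.sub measurable_id)).ennreal_ofReal
  have hmass : ∫⁻ u, ENNReal.ofReal (heatKernel n (z - u) c) = 1 :=
    (lintegral_sub_left_eq_self (fun x => ENNReal.ofReal (heatKernel n x c)) z).trans
      (lintegral_heatKernel hc)
  calc ∫⁻ u, ENNReal.ofReal (heatKernel n (z - u) c) * ENNReal.ofReal (phiWeight n σ u 1) ^ 2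
      ≤ ∫⁻ u, ENNReal.ofReal (heatKernel n (z - u) c)
          + ENNReal.ofReal ((4 * π * c) ^ (-(n : ℝ) / 2)) * S u := by
        refine lintegral_mono fun u => ?_
        calc ENNReal.ofReal (heatKernel n (z - u) c) * ENNReal.ofReal (phiWeight n σ u 1) ^ 2
            ≤ ENNReal.ofReal (heatKernel n (z - u) c) * (1 + S u) := by
              gcongr
              exact ofReal_phiWeight_one_sq_le σ u
          _ = ENNReal.ofReal (heatKernel n (z - u) c)
              + ENNReal.ofReal (heatKernel n (z - u) c) * S u := by ring
          _ ≤ _ := by gcongr; exact heatKernel_le hc _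
    _ = _ := by
        rw [lintegral_add_left hG, hmass, lintegral_const_mul _ hS,
          lintegral_indicator measurableSet_closedBall]

theorem lintegral_heatKernel_mul_phiWeight_sq_eq {t : ℝ} (hc : 0 < c) (ht : 0 < t) (z : ℝⁿ) :
    ∫⁻ w, ENNReal.ofReal (heatKernel n (z - w) (c * t))
        * ENNReal.ofReal (phiWeight n σ w t) ^ 2
      = ∫⁻ u, ENNReal.ofReal (heatKernel n ((√t)⁻¹ • z - u) c)
          * ENNReal.ofReal (phiWeight n σ u 1) ^ 2 := by
  have hr : 0 < √t := Real.sqrt_pos.2 ht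
  have hJ : ENNReal.ofReal ((√t ^ n)⁻¹) ≠ 0 := by
    rw [ne_eq, ENNReal.ofReal_eq_zero, not_le]
    positivity
  have hdil : ∀ u : ℝⁿ,
      ENNReal.ofReal (heatKernel n (z - √t • u) (c * t))
          * ENNReal.ofReal (phiWeight n σ (√t • u) t) ^ 2
        = ENNReal.ofReal ((√t ^ n)⁻¹) * (ENNReal.ofReal (heatKernel n ((√t)⁻¹ • z - u) c)
          * ENNReal.ofReal (phiWeight n σ u 1) ^ 2) := fun u => by
    have hct : c * t = c * √t ^ 2 := by rw [Real.sq_sqrt ht.le]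
    have hz : z - √t • u = √t • ((√t)⁻¹ • z - u) := by rw [smul_sub, smul_inv_smul₀ hr.ne']
    rw [phiWeight_sqrt_smul ht, hct, hz, heatKernel_smul hr hc,
      ENNReal.ofReal_mul (by positivity), mul_assoc]
  have hcov := lintegral_comp_smul (volume : Measure ℝⁿ) (fun w =>
    ENNReal.ofReal (heatKernel n (z - w) (c * t)) * ENNReal.ofReal (phiWeight n σ w t) ^ 2) hr.ne'
  rw [finrank_euclideanSpace_fin, abs_of_pos (by positivity)] at hcov
  refine (ENNReal.mul_right_inj hJ ENNReal.ofReal_ne_top).1 ?_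
  rw [← hcov, lintegral_congr hdil, lintegral_const_mul' _ _ ENNReal.ofReal_ne_top]

theorem exists_lintegral_heatKernel_mul_phiWeight_sq_le (hn : 1 ≤ n) (hσn : 2 * σ < n)
    (hc : 0 < c) :
    ∃ A : ℝ, 0 < A ∧ ∀ t > 0, ∀ z : ℝⁿ,
      ∫⁻ w, ENNReal.ofReal (heatKernel n (z - w) (c * t))
        * ENNReal.ofReal (phiWeight n σ w t) ^ 2 ≤ ENNReal.ofReal A := by
  set M := ∫⁻ u : ℝⁿ in closedBall 0 1, ENNReal.ofReal (‖u‖ ^ (-(2 * σ)))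
  have hM : M ≠ ∞ := (setLIntegral_closedBall_norm_rpow_neg_lt_top volume
    (by rwa [finrank_euclideanSpace_fin]) (by rwa [finrank_euclideanSpace_fin]) 1).ne
  refine ⟨1 + (4 * π * c) ^ (-(n : ℝ) / 2) * M.toReal, by positivity, fun t ht z => ?_⟩
  rw [lintegral_heatKernel_mul_phiWeight_sq_eq hc ht, ENNReal.ofReal_add zero_le_one
    (by positivity), ENNReal.ofReal_one, ENNReal.ofReal_mul (by positivity),
    ENNReal.ofReal_toReal hM]
  exact lintegral_heatKernel_mul_phiWeight_one_sq_le hc _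

end UniformBound

section Operators

variable {s A : ℝ}

theorem eLpNorm_mul_lintegral_heatKernel_le {φ : ℝⁿ → ℝ} (hφ : Measurable φ)
    (hA : ∀ z, ∫⁻ w, ENNReal.ofReal (heatKernel n (z - w) s) * ENNReal.ofReal (φ w) ^ 2
      ≤ ENNReal.ofReal A) {F : ℝⁿ → ℝ≥0∞} (hF : AEMeasurable F) :
    eLpNorm (fun x => ENNReal.ofReal (φ x)
        * ∫⁻ y, ENNReal.ofReal (heatKernel n (x - y) s) * (ENNReal.ofReal (φ y) * F y)) 2 volume
      ≤ ENNReal.ofReal A * eLpNorm F 2 volume :=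
  eLpNorm_mul_lintegral_le_of_schur
    ((measurable_heatKernel s).comp (measurable_fst.sub measurable_snd)).ennreal_ofReal
    hφ.ennreal_ofReal hF hA fun y => by simpa only [heatKernel_sub_comm] using hA y

theorem eLpNorm_mul_integral_heatKernel_le {φ : ℝⁿ → ℝ} (hs : 0 < s) (hφ0 : ∀ x, 0 ≤ φ x)
    (hφ : Measurable φ)
    (hA : ∀ z, ∫⁻ w, ENNReal.ofReal (heatKernel n (z - w) s) * ENNReal.ofReal (φ w) ^ 2
      ≤ ENNReal.ofReal A) {f : ℝⁿ → ℝ} (hf : AEStronglyMeasurable f) :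
    eLpNorm (fun x => φ x * ∫ y, heatKernel n (x - y) s * (φ y * f y)) 2 volume
      ≤ ENNReal.ofReal A * eLpNorm f 2 volume := by
  calc eLpNorm (fun x => φ x * ∫ y, heatKernel n (x - y) s * (φ y * f y)) 2 volume
      ≤ eLpNorm (fun x => ENNReal.ofReal (φ x)
          * ∫⁻ y, ENNReal.ofReal (heatKernel n (x - y) s) * (ENNReal.ofReal (φ y) * ‖f y‖ₑ))
          2 volume := by
        refine eLpNorm_mono_enorm fun x => ?_
        rw [enorm_mul, Real.enorm_of_nonneg (hφ0 x), enorm_eq_self]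
        gcongr
        refine (enorm_integral_le_lintegral_enorm _).trans_eq (lintegral_congr fun y => ?_)
        rw [enorm_mul, enorm_mul, Real.enorm_of_nonneg (heatKernel_nonneg hs _),
          Real.enorm_of_nonneg (hφ0 y)]
    _ ≤ ENNReal.ofReal A * eLpNorm f 2 volume := by
        rw [← eLpNorm_enorm f]
        exact eLpNorm_mul_lintegral_heatKernel_le hφ hA hf.enorm

theorem eLpNorm_integral_kernel_le_of_le_heatKernel [NeZero n] {φ : ℝⁿ → ℝ} (hA0 : 0 ≤ A)
    (hs : 0 < s) (hφ0 : ∀ x, 0 ≤ φ x) (hφ : Measurable φ)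
    (hA : ∀ z, ∫⁻ w, ENNReal.ofReal (heatKernel n (z - w) s) * ENNReal.ofReal (φ w) ^ 2
      ≤ ENNReal.ofReal A) {C₀ : ℝ} {K : ℝⁿ → ℝⁿ → ℝ} (hK0 : ∀ x y, 0 ≤ K x y)
    (hK : ∀ x y, x ≠ 0 → y ≠ 0 → K x y ≤ C₀ * φ x * φ y * heatKernel n (x - y) s)
    {f : ℝⁿ → ℝ} (hf : AEStronglyMeasurable f) :
    eLpNorm (fun x => ∫ y, K x y * f y) 2 volume
      ≤ ENNReal.ofReal (C₀ * A) * eLpNorm f 2 volume := by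
  have hpoint : ∀ᵐ x : ℝⁿ, ‖∫ y, K x y * f y‖ₑ ≤ C₀.toNNReal * ‖ENNReal.ofReal (φ x)
      * ∫⁻ y, ENNReal.ofReal (heatKernel n (x - y) s) * (ENNReal.ofReal (φ y) * ‖f y‖ₑ)‖ₑ := by
    filter_upwards [Measure.ae_ne volume 0] with x hx
    rw [enorm_eq_self, ← lintegral_const_mul' _ _ ENNReal.ofReal_ne_top,
      ← lintegral_const_mul' _ _ ENNReal.coe_ne_top]
    refine (enorm_integral_le_lintegral_enorm _).trans (lintegral_mono_ae ?_)
    filter_upwards [Measure.ae_ne volume 0] with y hy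
    rw [enorm_mul, Real.enorm_of_nonneg (hK0 x y)]
    calc ENNReal.ofReal (K x y) * ‖f y‖ₑ
        ≤ ENNReal.ofReal (C₀ * φ x * φ y * heatKernel n (x - y) s) * ‖f y‖ₑ := by
          gcongr
          exact hK x y hx hy
      _ = ENNReal.ofReal C₀ * (ENNReal.ofReal (φ x) * (ENNReal.ofReal (heatKernel n (x - y) s)
            * (ENNReal.ofReal (φ y) * ‖f y‖ₑ))) := by
          rw [ENNReal.ofReal_mul' (heatKernel_nonneg hs _), ENNReal.ofReal_mul' (hφ0 y),
            ENNReal.ofReal_mul' (hφ0 x)]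
          ring
  calc eLpNorm (fun x => ∫ y, K x y * f y) 2 volume
      ≤ C₀.toNNReal • eLpNorm (fun x => ENNReal.ofReal (φ x)
          * ∫⁻ y, ENNReal.ofReal (heatKernel n (x - y) s) * (ENNReal.ofReal (φ y) * ‖f y‖ₑ))
          2 volume :=
        eLpNorm_le_nnreal_smul_eLpNorm_of_ae_le_mul' hpoint 2
    _ ≤ C₀.toNNReal • (ENNReal.ofReal A * eLpNorm f 2 volume) := by
        rw [← eLpNorm_enorm f]
        gcongr
        exact eLpNorm_mul_lintegral_heatKernel_le hφ hA hf.enorm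
    _ = ENNReal.ofReal (C₀ * A) * eLpNorm f 2 volume := by
        rw [ENNReal.smul_def, smul_eq_mul, ← mul_assoc, ENNReal.ofReal_mul' hA0]
        rfl

end Operators

theorem L2_uniform_bound_general (n : ℕ) (hn : 1 ≤ n) (σ : ℝ)
    (hσn : 2 * σ < (n : ℝ)) (c C₀ : ℝ) (hc : 0 < c) :
    ∃ C > 0,
      (∀ t > (0 : ℝ), ∀ f : EuclideanSpace ℝ (Fin n) → ℝ, (∀ x, 0 ≤ f x) →
        MemLp f 2 volume →
        eLpNorm (fun x : EuclideanSpace ℝ (Fin n) =>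
            phiWeight n σ x t *
              ∫ y, heatKernel n (x - y) (c * t) * (phiWeight n σ y t * f y)) 2 volume ≤
          ENNReal.ofReal C * eLpNorm f 2 volume) ∧
      (∀ K : ℝ → EuclideanSpace ℝ (Fin n) → EuclideanSpace ℝ (Fin n) → ℝ,
        (Measurable fun q : ℝ × EuclideanSpace ℝ (Fin n) × EuclideanSpace ℝ (Fin n) =>
          K q.1 q.2.1 q.2.2) →
        (∀ t > (0 : ℝ), ∀ x y, 0 ≤ K t x y) →
        (∀ t > (0 : ℝ), ∀ x y : EuclideanSpace ℝ (Fin n), x ≠ 0 → y ≠ 0 →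
          K t x y ≤ C₀ * phiWeight n σ x t * phiWeight n σ y t *
            heatKernel n (x - y) (c * t)) →
        ∀ t > (0 : ℝ), ∀ f : EuclideanSpace ℝ (Fin n) → ℝ, (∀ x, 0 ≤ f x) →
          MemLp f 2 volume →
          eLpNorm (fun x : EuclideanSpace ℝ (Fin n) => ∫ y, K t x y * f y) 2 volume ≤
            ENNReal.ofReal (C₀ * C) * eLpNorm f 2 volume) := by
  obtain ⟨A, hA0, hA⟩ := exists_lintegral_heatKernel_mul_phiWeight_sq_le hn hσn hc
  have : NeZero n := ⟨by omega⟩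
  refine ⟨A, hA0, fun t ht f _ hf => ?_, fun K _ hK0 hK t ht f _ hf => ?_⟩
  · exact eLpNorm_mul_integral_heatKernel_le (mul_pos hc ht) (fun x => phiWeight_nonneg σ x t)
      (measurable_phiWeight σ t) (hA t ht) hf.1
  · exact eLpNorm_integral_kernel_le_of_le_heatKernel hA0.le (mul_pos hc ht)
      (fun x => phiWeight_nonneg σ x t) (measurable_phiWeight σ t) (hA t ht) (hK0 t ht) (hK t ht)
      hf.1

/-- Uniform `L² → L²` boundedness: the weighted convolution operator
`f ↦ φ_σ(·,t)·(G(·,ct) ∗ (φ_σ(·,t) f))` is bounded on `L²` uniformly in `t > 0`;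
consequently any integral operator with kernel dominated by
`C₀·φ_σ(x,t)·φ_σ(y,t)·G(x−y,ct)` is bounded on `L²` uniformly in `t`. -/
theorem L2_uniform_bound (n : ℕ) (hn : 1 ≤ n) (σ : ℝ)
    (hσ : 0 < σ) (hσn : 2 * σ < (n : ℝ)) (c C₀ : ℝ) (hc : 0 < c) (hC₀ : 0 < C₀) :
    ∃ C > 0,
      (∀ t > (0 : ℝ), ∀ f : EuclideanSpace ℝ (Fin n) → ℝ, (∀ x, 0 ≤ f x) →
        MemLp f 2 volume →
        eLpNorm (fun x : EuclideanSpace ℝ (Fin n) =>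
            phiWeight n σ x t *
              ∫ y, heatKernel n (x - y) (c * t) * (phiWeight n σ y t * f y)) 2 volume ≤
          ENNReal.ofReal C * eLpNorm f 2 volume) ∧
      (∀ K : ℝ → EuclideanSpace ℝ (Fin n) → EuclideanSpace ℝ (Fin n) → ℝ,
        (Measurable fun q : ℝ × EuclideanSpace ℝ (Fin n) × EuclideanSpace ℝ (Fin n) =>
          K q.1 q.2.1 q.2.2) →
        (∀ t > (0 : ℝ), ∀ x y, 0 ≤ K t x y) →
        (∀ t > (0 : ℝ), ∀ x y : EuclideanSpace ℝ (Fin n), x ≠ 0 → y ≠ 0 →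
          K t x y ≤ C₀ * phiWeight n σ x t * phiWeight n σ y t *
            heatKernel n (x - y) (c * t)) →
        ∀ t > (0 : ℝ), ∀ f : EuclideanSpace ℝ (Fin n) → ℝ, (∀ x, 0 ≤ f x) →
          MemLp f 2 volume →
          eLpNorm (fun x : EuclideanSpace ℝ (Fin n) => ∫ y, K t x y * f y) 2 volume ≤
            ENNReal.ofReal (C₀ * C) * eLpNorm f 2 volume) :=
  L2_uniform_bound_general n hn σ hσn c C₀ hc
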